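/- arXiv:2507.10443 — 3 statements merged into one kernel-verified Lean document; each statement's English description precedes it below -/
import Mathlib

section
/- Let p be a probability mass function on a finite type α and let x ∈ α. Then h_b(p(x)) ≤ H(p), where h_b(t) = −t log t − (1−t) log(1−t) is the binary entropy function (with the convention 0 log 0 = 0). In particular, if H(p) is small then every individual probability p(x) is forced to be near 0 or near 1. -/
open Real

/-- Shannon entropy of a probability mass function on a finite type:
`H(p) = ∑ x, −p(x) log p(x)` (with `0 log 0 = 0`). -/
noncomputable def pmfEntropy {α : Type*} [Fintype α] (p : α → ℝ) : ℝ :=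
  ∑ x : α, Real.negMulLog (p x)

lemma negMulLog_sum_le {α : Type*} (s : Finset α) (p : α → ℝ) (h0 : ∀ x ∈ s, 0 ≤ p x) :
    Real.negMulLog (∑ x ∈ s, p x) ≤ ∑ x ∈ s, Real.negMulLog (p x) := by
  rw [Real.negMulLog, neg_mul, neg_le, Finset.sum_mul, ← Finset.sum_neg_distrib]
  apply Finset.sum_le_sum
  intro i hi
  rw [Real.negMulLog, neg_mul, neg_neg]
  rcases eq_or_lt_of_le (h0 i hi) with h | h
  · simp [← h]
  · have hle : p i ≤ ∑ x ∈ s, p x := Finset.single_le_sum h0 hi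
    exact mul_le_mul_of_nonneg_left (Real.log_le_log h hle) (h0 i hi)

/-- **The binary entropy of any single probability lower-bounds the total entropy:**
`h_b(p(x)) ≤ H(p)` for every `x`. -/
theorem binEntropy_le_pmfEntropy {α : Type*} [Fintype α]
    (p : α → ℝ) (hp0 : ∀ x, 0 ≤ p x) (hp1 : ∑ x : α, p x = 1) (x : α) :
    Real.binEntropy (p x) ≤ pmfEntropy p := by
  classical
  rw [Real.binEntropy_eq_negMulLog_add_negMulLog_one_sub, pmfEntropy,
    ← Finset.sum_erase_add _ _ (Finset.mem_univ x), add_comm]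
  gcongr
  have : 1 - p x = ∑ y ∈ Finset.univ.erase x, p y := by
    rw [← hp1, ← Finset.sum_erase_add _ _ (Finset.mem_univ x)]; ring
  rw [this]
  exact negMulLog_sum_le _ _ (fun y _ => hp0 y)
end

section
/- Let α be a finite type, Δ the probability simplex over α, and f : ℝ^α → ℝ convex and continuously differentiable on a neighborhood of Δ, with a unique minimizer p* over Δ. Fix λ > 0 and an initial pmf p₀ in the relative interior of Δ, and define the KL-proximal iterates p_{t+1} = argmin_{p ∈ Δ} [ f(p) + λ KL(p ‖ p_t) ]. Then every iterate p_t lies in the relative interior of Δ, the descent inequality f(p_{t+1}) − f(p*) ≤ λ [ KL(p* ‖ p_t) − KL(p* ‖ p_{t+1}) − KL(p_{t+1} ‖ p_t) ] holds for every t, the sequence KL(p* ‖ p_t) is nonincreasing, f(p_t) → f(p*), and p_t → p*. -/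
open Filter Topology

/-- The probability simplex over a finite type `α`. -/
def probSimplex (α : Type*) [Fintype α] : Set (α → ℝ) :=
  {p | (∀ x, 0 ≤ p x) ∧ ∑ x : α, p x = 1}

/-- Kullback–Leibler divergence between pmfs on a finite type
(with the convention `0 log 0 = 0`). -/
noncomputable def klDiv {α : Type*} [Fintype α] (p q : α → ℝ) : ℝ :=
  ∑ x : α, p x * Real.log (p x / q x)

/-!
Everything rests on the compensation identity for a mixture `mₛ = (1 - s) m + s q`:
`KL(mₛ‖c) = (1 - s) KL(m‖c) + s KL(q‖c) - (1 - s) KL(m‖mₛ) - s KL(q‖mₛ)`.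
Together with convexity of `f` and minimality of `m` for `f + λ KL(·‖c)` it gives
`λ KL(q‖mₛ) ≤ [f q + λ KL(q‖c)] - [f m + λ KL(m‖c)]` for all `s ∈ (0, 1)`.
With `q` a point mass at a coordinate where `m` vanishes the left side is `-λ log s → ∞`,
so minimizers are strictly positive; for positive `m`, letting `s → 0` gives the
three-point inequality. Along the iteration it bounds `f(pₜ₊₁) - f(p*) ≥ 0` by the decrease
of the nonincreasing, nonnegative `λ KL(p*‖pₜ)`, so `f(pₜ) → f(p*)`; compactness of the
simplex and uniqueness of the minimizer then give `pₜ → p*`.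
-/

open Real

lemma sub_le_mul_log_div {p q : ℝ} (hp : 0 ≤ p) (hq : 0 ≤ q) (hpq : q = 0 → p = 0) :
    p - q ≤ p * log (p / q) := by
  rcases hp.eq_or_lt with rfl | hp
  · simpa using hq
  have hq : 0 < q := hq.lt_of_ne fun h => hp.ne' (hpq h.symm)
  have hlog := one_sub_inv_le_log_of_pos (div_pos hp hq)
  rw [inv_div] at hlog
  calc p - q = p * (1 - q / p) := by field_simp
    _ ≤ p * log (p / q) := mul_le_mul_of_nonneg_left hlog hp.le

theorem klDiv_nonneg {α : Type*} [Fintype α] {p q : α → ℝ} (hp : p ∈ probSimplex α)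
    (hq : q ∈ probSimplex α) (hpq : ∀ x, q x = 0 → p x = 0) : 0 ≤ klDiv p q :=
  calc (0 : ℝ) = ∑ x, (p x - q x) := by rw [Finset.sum_sub_distrib, hp.2, hq.2, sub_self]
    _ ≤ klDiv p q := Finset.sum_le_sum fun x _ => sub_le_mul_log_div (hp.1 x) (hq.1 x) (hpq x)

lemma mul_log_div_sub_mul_log_div {y c m : ℝ} (hc : c ≠ 0) (hm : y ≠ 0 → m ≠ 0) :
    y * log (y / c) - y * log (y / m) = y * log (m / c) := by
  rcases eq_or_ne y 0 with rfl | hy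
  · simp
  rw [log_div hy hc, log_div hy (hm hy), log_div (hm hy) hc]
  ring

theorem klDiv_mix {α : Type*} [Fintype α] {a b c : α → ℝ} (ha : ∀ x, 0 ≤ a x)
    (hb : ∀ x, 0 ≤ b x) (hc : ∀ x, c x ≠ 0) {s : ℝ} (hs0 : 0 < s) (hs1 : s < 1) :
    klDiv ((1 - s) • a + s • b) c = (1 - s) * klDiv a c + s * klDiv b c
      - ((1 - s) * klDiv a ((1 - s) • a + s • b) + s * klDiv b ((1 - s) • a + s • b)) := by
  set m := (1 - s) • a + s • b
  have hmx : ∀ x, m x = (1 - s) * a x + s * b x := fun x => rfl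
  have hma : ∀ x, a x ≠ 0 → m x ≠ 0 := fun x hx => by
    rw [hmx]
    exact (add_pos_of_pos_of_nonneg (mul_pos (sub_pos.2 hs1) ((ha x).lt_of_ne' hx))
      (mul_nonneg hs0.le (hb x))).ne'
  have hmb : ∀ x, b x ≠ 0 → m x ≠ 0 := fun x hx => by
    rw [hmx]
    exact (add_pos_of_nonneg_of_pos (mul_nonneg (sub_pos.2 hs1).le (ha x))
      (mul_pos hs0 ((hb x).lt_of_ne' hx))).ne'
  simp only [klDiv, Finset.mul_sum, ← Finset.sum_add_distrib, ← Finset.sum_sub_distrib]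
  refine Finset.sum_congr rfl fun x _ => ?_
  linear_combination (-(1 - s)) * mul_log_div_sub_mul_log_div (hc x) (hma x)
    - s * mul_log_div_sub_mul_log_div (hc x) (hmb x) + log (m x / c x) * hmx x

lemma klDiv_single_one_left {α : Type*} [Fintype α] [DecidableEq α] (i : α) (q : α → ℝ) :
    klDiv (Pi.single i 1) q = -log (q i) := by
  rw [klDiv, Fintype.sum_eq_single i fun x hx => by simp [hx]]
  simp

lemma continuousAt_klDiv_right {α : Type*} [Fintype α] (q : α → ℝ) {m : α → ℝ}
    (hm : ∀ x, m x ≠ 0) : ContinuousAt (klDiv q) m := by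
  refine tendsto_finsetSum _ fun x _ => ?_
  by_cases hq : q x = 0
  · simp [hq]
  · exact continuousAt_const.mul ((continuousAt_const.div (continuous_apply x).continuousAt
      (hm x)).log (div_ne_zero hq (hm x)))

section KLProximal

variable {α : Type*} [Fintype α]

def IsKLProxMin (f : (α → ℝ) → ℝ) (lam : ℝ) (c m : α → ℝ) : Prop :=
  m ∈ probSimplex α ∧ ∀ q ∈ probSimplex α, f m + lam * klDiv m c ≤ f q + lam * klDiv q c

variable {f : (α → ℝ) → ℝ} {lam : ℝ} {c m : α → ℝ}

theorem IsKLProxMin.klDiv_mix_le (hm : IsKLProxMin f lam c m)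
    (hconv : ConvexOn ℝ (probSimplex α) f) (hlam : 0 ≤ lam)
    (hc : ∀ x, 0 < c x) {q : α → ℝ} (hq : q ∈ probSimplex α) {s : ℝ} (hs0 : 0 < s)
    (hs1 : s < 1) :
    lam * klDiv q ((1 - s) • m + s • q)
      ≤ f q + lam * klDiv q c - (f m + lam * klDiv m c) := by
  set ms := (1 - s) • m + s • q
  have hms : ms ∈ probSimplex α :=
    convex_stdSimplex ℝ α hm.1 hq (sub_nonneg.2 hs1.le) hs0.le (by ring)
  have hf : f ms ≤ (1 - s) * f m + s * f q :=
    hconv.2 hm.1 hq (sub_nonneg.2 hs1.le) hs0.le (by ring)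
  have hgibbs : 0 ≤ klDiv m ms := klDiv_nonneg hm.1 hms fun x hx => by
    have : (1 - s) * m x + s * q x = 0 := hx
    nlinarith [hm.1.1 x, hq.1 x]
  have hmix := klDiv_mix hm.1.1 hq.1 (fun x => (hc x).ne') hs0 hs1
  have hle := hm.2 ms hms
  rw [hmix] at hle
  refine le_of_mul_le_mul_left ?_ hs0
  nlinarith [mul_nonneg (mul_nonneg hlam (sub_nonneg.2 hs1.le)) hgibbs]

theorem IsKLProxMin.pos (hm : IsKLProxMin f lam c m)
    (hconv : ConvexOn ℝ (probSimplex α) f) (hlam : 0 < lam)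
    (hc : ∀ x, 0 < c x) : ∀ x, 0 < m x := by
  classical
  intro i
  by_contra! hi
  have hmi : m i = 0 := le_antisymm hi (hm.1.1 i)
  set R := f (Pi.single i 1) + lam * klDiv (Pi.single i 1) c - (f m + lam * klDiv m c)
  have hR : 0 ≤ R := sub_nonneg.2 (hm.2 _ (single_mem_stdSimplex ℝ i))
  -- chosen so that `-lam * log s = R + lam` exceeds the bound `R`
  set s := exp (-(R / lam + 1))
  have hs1 : s < 1 := exp_lt_one_iff.2 (by linarith [div_nonneg hR hlam.le])
  have hbound := hm.klDiv_mix_le hconv hlam.le hc (single_mem_stdSimplex ℝ i) (exp_pos _) hs1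
  have hsi : ((1 - s) • m + s • Pi.single i 1 : α → ℝ) i = s := by simp [hmi]
  rw [klDiv_single_one_left, hsi, log_exp] at hbound
  have : lam * (R / lam + 1) = R + lam := by field_simp
  linarith

theorem IsKLProxMin.three_point (hm : IsKLProxMin f lam c m)
    (hconv : ConvexOn ℝ (probSimplex α) f) (hlam : 0 ≤ lam)
    (hc : ∀ x, 0 < c x) (hmpos : ∀ x, 0 < m x)
    {q : α → ℝ} (hq : q ∈ probSimplex α) :
    f m - f q ≤ lam * (klDiv q c - klDiv q m - klDiv m c) := by
  have hseg : Tendsto (fun s : ℝ => (1 - s) • m + s • q) (𝓝[>] 0) (𝓝 m) := by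
    have : Continuous fun s : ℝ => (1 - s) • m + s • q := by fun_prop
    simpa using (this.tendsto 0).mono_left nhdsWithin_le_nhds
  have hlim := ((continuousAt_klDiv_right q fun x => (hmpos x).ne').tendsto.comp hseg).const_mul lam
  have hbound : ∀ᶠ s in 𝓝[>] (0 : ℝ), lam * klDiv q ((1 - s) • m + s • q)
      ≤ f q + lam * klDiv q c - (f m + lam * klDiv m c) :=
    eventually_of_mem (Ioo_mem_nhdsGT one_pos) fun s hs =>
      hm.klDiv_mix_le hconv hlam hc hq hs.1 hs.2
  linarith [le_of_tendsto hlim hbound]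

end KLProximal

lemma tendsto_zero_of_le_sub_succ {a K : ℕ → ℝ} (ha : ∀ t, 0 ≤ a t)
    (haK : ∀ t, a t ≤ K t - K (t + 1)) (hK : BddBelow (Set.range K)) :
    Tendsto a atTop (𝓝 0) := by
  have hanti : Antitone K := antitone_nat_of_succ_le fun t => by linarith [ha t, haK t]
  have hlim := tendsto_atTop_ciInf hanti hK
  have hstep : Tendsto (fun t => K t - K (t + 1)) atTop (𝓝 0) := by
    simpa using hlim.sub (hlim.comp (tendsto_add_atTop_nat 1))
  exact squeeze_zero ha haK hstep

theorem IsCompact.tendsto_of_tendsto_apply_isMinOn {X ι : Type*} [TopologicalSpace X]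
    {S : Set X} (hS : IsCompact S) {f : X → ℝ} (hf : ContinuousOn f S) {x₀ : X}
    (hmin : IsMinOn f S x₀) (huniq : ∀ y ∈ S, IsMinOn f S y → y = x₀)
    {l : Filter ι} {u : ι → X} (hu : ∀ᶠ i in l, u i ∈ S)
    (hfu : Tendsto (f ∘ u) l (𝓝 (f x₀))) : Tendsto u l (𝓝 x₀) := by
  refine hS.tendsto_nhds_of_unique_mapClusterPt hu fun y hy hclus =>
    huniq y hy <| isMinOn_iff.2 fun z hz => ?_
  have hfy : MapClusterPt (f y) l (f ∘ u) :=
    hclus.tendsto_comp' ((hf y hy).tendsto.mono_left (inf_le_inf_left _ (tendsto_principal.2 hu)))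
  rw [eq_of_nhds_neBot (hfy.neBot.mono (inf_le_inf_left _ hfu))]
  exact hmin hz

theorem kl_proximal_convergence_general {α : Type*} [Fintype α]
    (f : (α → ℝ) → ℝ) (U : Set (α → ℝ))
    (hΔU : probSimplex α ⊆ U)
    (hconv : ConvexOn ℝ U f) (hdiff : ContDiffOn ℝ 1 f U)
    (pstar : α → ℝ) (hpstar : pstar ∈ probSimplex α)
    (hmin : ∀ q ∈ probSimplex α, f pstar ≤ f q)
    (huniq : ∀ q ∈ probSimplex α, (∀ r ∈ probSimplex α, f q ≤ f r) → q = pstar)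
    (lam : ℝ) (hlam : 0 < lam)
    (p : ℕ → α → ℝ) (hp0 : p 0 ∈ probSimplex α) (hp0pos : ∀ x, 0 < p 0 x)
    (hiter : ∀ t, p (t + 1) ∈ probSimplex α ∧
      ∀ q ∈ probSimplex α,
        f (p (t + 1)) + lam * klDiv (p (t + 1)) (p t)
          ≤ f q + lam * klDiv q (p t)) :
    (∀ t x, 0 < p t x) ∧
    (∀ t, f (p (t + 1)) - f pstar ≤
      lam * (klDiv pstar (p t) - klDiv pstar (p (t + 1)) - klDiv (p (t + 1)) (p t))) ∧
    (∀ s t, s ≤ t → klDiv pstar (p t) ≤ klDiv pstar (p s)) ∧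
    Tendsto (fun t => f (p t)) atTop (𝓝 (f pstar)) ∧
    Tendsto p atTop (𝓝 pstar) := by
  have hconvΔ : ConvexOn ℝ (probSimplex α) f := hconv.subset hΔU (convex_stdSimplex ℝ α)
  have hstep : ∀ t, IsKLProxMin f lam (p t) (p (t + 1)) := hiter
  have hmem : ∀ t, p t ∈ probSimplex α
    | 0 => hp0
    | t + 1 => (hstep t).1
  have hpos : ∀ t x, 0 < p t x := by
    intro t
    induction t with
    | zero => exact hp0pos
    | succ t ih => exact (hstep t).pos hconvΔ hlam ih
  have hdescent : ∀ t, f (p (t + 1)) - f pstar ≤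
      lam * (klDiv pstar (p t) - klDiv pstar (p (t + 1)) - klDiv (p (t + 1)) (p t)) :=
    fun t => (hstep t).three_point hconvΔ hlam.le (hpos t) (hpos (t + 1)) hpstar
  have hKL : ∀ q ∈ probSimplex α, ∀ t, 0 ≤ lam * klDiv q (p t) := fun q hq t =>
    mul_nonneg hlam.le (klDiv_nonneg hq (hmem t) fun x hx => absurd hx (hpos t x).ne')
  have hgap : ∀ t, f (p (t + 1)) - f pstar
      ≤ lam * klDiv pstar (p t) - lam * klDiv pstar (p (t + 1)) := fun t => by
    linarith [hdescent t, hKL _ (hmem (t + 1)) t]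
  have hgap_nonneg : ∀ t, 0 ≤ f (p (t + 1)) - f pstar := fun t => sub_nonneg.2 (hmin _ (hmem _))
  have hanti : Antitone fun t => klDiv pstar (p t) := antitone_nat_of_succ_le fun t =>
    le_of_mul_le_mul_left (by linarith [hgap t, hgap_nonneg t]) hlam
  have hf : Tendsto (fun t => f (p t)) atTop (𝓝 (f pstar)) := by
    have hgap_lim := tendsto_zero_of_le_sub_succ (K := fun t => lam * klDiv pstar (p t))
      hgap_nonneg hgap ⟨0, by rintro _ ⟨t, rfl⟩; exact hKL pstar hpstar t⟩
    rw [← tendsto_add_atTop_iff_nat 1]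
    simpa using hgap_lim.add_const (f pstar)
  refine ⟨hpos, hdescent, fun s t hst => hanti hst, hf, ?_⟩
  exact (isCompact_stdSimplex ℝ α).tendsto_of_tendsto_apply_isMinOn
    (hdiff.continuousOn.mono hΔU) hmin huniq (Eventually.of_forall hmem) hf

/-- **Convergence of KL-proximal (entropy-regularized, mirror-descent) iterates.**
For a convex, continuously differentiable objective `f` on a neighborhood of the
simplex with unique minimizer `p*`, the iterates
`p_{t+1} = argmin_{p ∈ Δ} [f(p) + λ KL(p‖p_t)]` starting from a strictly positive pmf
stay strictly positive, satisfy the three-point descent inequality, make `KL(p*‖p_t)`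
nonincreasing, and converge with `f(p_t) → f(p*)` and `p_t → p*`. -/
theorem kl_proximal_convergence {α : Type*} [Fintype α]
    (f : (α → ℝ) → ℝ) (U : Set (α → ℝ)) (hUopen : IsOpen U)
    (hΔU : probSimplex α ⊆ U)
    (hconv : ConvexOn ℝ U f) (hdiff : ContDiffOn ℝ 1 f U)
    (pstar : α → ℝ) (hpstar : pstar ∈ probSimplex α)
    (hmin : ∀ q ∈ probSimplex α, f pstar ≤ f q)
    (huniq : ∀ q ∈ probSimplex α, (∀ r ∈ probSimplex α, f q ≤ f r) → q = pstar)
    (lam : ℝ) (hlam : 0 < lam)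
    (p : ℕ → α → ℝ) (hp0 : p 0 ∈ probSimplex α) (hp0pos : ∀ x, 0 < p 0 x)
    (hiter : ∀ t, p (t + 1) ∈ probSimplex α ∧
      ∀ q ∈ probSimplex α,
        f (p (t + 1)) + lam * klDiv (p (t + 1)) (p t)
          ≤ f q + lam * klDiv q (p t)) :
    (∀ t x, 0 < p t x) ∧
    (∀ t, f (p (t + 1)) - f pstar ≤
      lam * (klDiv pstar (p t) - klDiv pstar (p (t + 1)) - klDiv (p (t + 1)) (p t))) ∧
    (∀ s t, s ≤ t → klDiv pstar (p t) ≤ klDiv pstar (p s)) ∧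
    Tendsto (fun t => f (p t)) atTop (𝓝 (f pstar)) ∧
    Tendsto p atTop (𝓝 pstar) :=
  kl_proximal_convergence_general f U hΔU hconv hdiff pstar hpstar hmin huniq lam hlam p hp0 hp0pos
    hiter
end

section
/- Let α and β be finite types and let p be a probability mass function on α. For a channel W assigning to each x ∈ α a probability mass function W(x) on β, let I(p; W) denote the mutual information of the pair (X, Z) whose joint distribution is (x,z) ↦ p(x) W(x)(z). Then I(p; W) is a convex function of the channel: for any two channels W₁, W₂ and t ∈ [0,1], I(p; t W₁ + (1−t) W₂) ≤ t I(p; W₁) + (1−t) I(p; W₂), where (t W₁ + (1−t) W₂)(x) = t W₁(x) + (1−t) W₂(x). -/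
/-!
Mutual information is the relative entropy `D(P_{XZ} ‖ P_X ⊗ P_Z)`. Both the joint law
`p(x) W(x)(z)` and the product law `p(x) ∑ₓ' p(x') W(x')(z)` are affine in the channel `W`,
so convexity in `W` follows from the joint convexity of relative entropy, which in turn is
the two-term log-sum inequality applied coordinatewise.
-/

open Real

/-- Shannon entropy of a (sub)probability vector on a finite type:
`H(q) = ∑ y, −q(y) log q(y)` (with `0 log 0 = 0`). -/
noncomputable def ent {γ : Type*} [Fintype γ] (q : γ → ℝ) : ℝ :=
  ∑ y : γ, Real.negMulLog (q y)

/-- Mutual information `I(X; Z) = H(X) + H(Z) − H(X, Z)` of the pair `(X, Z)` whose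
joint distribution is `(x, z) ↦ p(x) W(x)(z)`, for an input pmf `p` on `α` and a
channel `W` from `α` to `β`. -/
noncomputable def mutualInfoChan {α β : Type*} [Fintype α] [Fintype β]
    (p : α → ℝ) (W : α → β → ℝ) : ℝ :=
  ent p + ent (fun z => ∑ x : α, p x * W x z)
    - ent (fun xz : α × β => p xz.1 * W xz.1 xz.2)

open Finset

/-- Since `a / 0 = 0`, this is the relative entropy `D(a ‖ b)` only when `b y = 0 → a y = 0`. -/
noncomputable def relEnt {γ : Type*} [Fintype γ] (a b : γ → ℝ) : ℝ :=
  ∑ y, a y * log (a y / b y)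

/-- The two-term log-sum inequality: Jensen for `x log x` at the points `aᵢ / bᵢ` with
weights `bᵢ / (b₁ + b₂)`. -/
theorem add_mul_log_add_div_add_le {a₁ a₂ b₁ b₂ : ℝ} (ha₁ : 0 ≤ a₁) (ha₂ : 0 ≤ a₂)
    (hb₁ : 0 ≤ b₁) (hb₂ : 0 ≤ b₂) (h₁ : b₁ = 0 → a₁ = 0) (h₂ : b₂ = 0 → a₂ = 0) :
    (a₁ + a₂) * log ((a₁ + a₂) / (b₁ + b₂)) ≤ a₁ * log (a₁ / b₁) + a₂ * log (a₂ / b₂) := by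
  rcases (add_nonneg hb₁ hb₂).eq_or_lt with hB | hB
  · have hb₁0 : b₁ = 0 := by linarith
    have hb₂0 : b₂ = 0 := by linarith
    simp [h₁ hb₁0, h₂ hb₂0]
  set B := b₁ + b₂
  have hweight : ∀ {a b : ℝ}, (b = 0 → a = 0) → b / B * (a / b) = a / B := by
    intro a b h
    rcases eq_or_ne b 0 with rfl | hb
    · simp [h rfl]
    · field_simp
  have jensen := convexOn_mul_log.2 (Set.mem_Ici.2 (div_nonneg ha₁ hb₁))
    (Set.mem_Ici.2 (div_nonneg ha₂ hb₂)) (div_nonneg hb₁ hB.le) (div_nonneg hb₂ hB.le)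
    (by rw [← add_div, div_self hB.ne'])
  simp only [smul_eq_mul] at jensen
  rw [hweight h₁, hweight h₂, ← add_div, ← mul_assoc, ← mul_assoc, hweight h₁, hweight h₂] at jensen
  calc (a₁ + a₂) * log ((a₁ + a₂) / B) = B * ((a₁ + a₂) / B * log ((a₁ + a₂) / B)) := by
        field_simp
    _ ≤ B * (a₁ / B * log (a₁ / b₁) + a₂ / B * log (a₂ / b₂)) := by gcongr
    _ = a₁ * log (a₁ / b₁) + a₂ * log (a₂ / b₂) := by field_simp

theorem relEnt_mix_le {γ : Type*} [Fintype γ] (a₁ a₂ b₁ b₂ : γ → ℝ)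
    (ha₁ : ∀ y, 0 ≤ a₁ y) (ha₂ : ∀ y, 0 ≤ a₂ y) (hb₁ : ∀ y, 0 ≤ b₁ y) (hb₂ : ∀ y, 0 ≤ b₂ y)
    (h₁ : ∀ y, b₁ y = 0 → a₁ y = 0) (h₂ : ∀ y, b₂ y = 0 → a₂ y = 0)
    {t : ℝ} (ht0 : 0 ≤ t) (ht1 : t ≤ 1) :
    relEnt (fun y => t * a₁ y + (1 - t) * a₂ y) (fun y => t * b₁ y + (1 - t) * b₂ y)
      ≤ t * relEnt a₁ b₁ + (1 - t) * relEnt a₂ b₂ := by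
  have hscale : ∀ c a b : ℝ, c * a * log (c * a / (c * b)) = c * (a * log (a / b)) := by
    intro c a b
    rcases eq_or_ne c 0 with rfl | hc
    · simp
    · rw [mul_div_mul_left _ _ hc, mul_assoc]
  have hs : 0 ≤ 1 - t := sub_nonneg.2 ht1
  unfold relEnt
  rw [mul_sum, mul_sum, ← sum_add_distrib]
  refine sum_le_sum fun y _ => ?_
  rw [← hscale t, ← hscale (1 - t)]
  exact add_mul_log_add_div_add_le (mul_nonneg ht0 (ha₁ y)) (mul_nonneg hs (ha₂ y))
    (mul_nonneg ht0 (hb₁ y)) (mul_nonneg hs (hb₂ y))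
    (fun h => by rcases mul_eq_zero.1 h with h | h <;> simp [h, h₁ y])
    (fun h => by rcases mul_eq_zero.1 h with h | h <;> simp [h, h₂ y])

theorem mul_log_div_mul_eq {a b c : ℝ} (h : b * c = 0 → a = 0) :
    a * log (a / (b * c)) = a * log a - a * log b - a * log c := by
  rcases eq_or_ne a 0 with rfl | ha
  · simp
  obtain ⟨hb, hc⟩ := mul_ne_zero_iff.1 (mt h ha)
  rw [log_div ha (mul_ne_zero hb hc), log_mul hb hc]
  ring

theorem mul_apply_eq_zero_of_mul_sum_eq_zero {α β : Type*} [Fintype α] {p : α → ℝ}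
    {W : α → β → ℝ} (hp : ∀ x, 0 ≤ p x) (hW : ∀ x z, 0 ≤ W x z) {x : α} {z : β}
    (h : p x * ∑ x', p x' * W x' z = 0) : p x * W x z = 0 := by
  rcases mul_eq_zero.1 h with h | h
  · simp [h]
  · exact (sum_eq_zero_iff_of_nonneg fun x' _ => mul_nonneg (hp x') (hW x' z)).1 h x (mem_univ x)

theorem mutualInfoChan_eq_relEnt {α β : Type*} [Fintype α] [Fintype β] (p : α → ℝ)
    (W : α → β → ℝ) (hp : ∀ x, 0 ≤ p x) (hW : ∀ x z, 0 ≤ W x z) (hW1 : ∀ x, ∑ z, W x z = 1) :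
    mutualInfoChan p W = relEnt (fun xz : α × β => p xz.1 * W xz.1 xz.2)
      (fun xz => p xz.1 * ∑ x, p x * W x xz.2) := by
  have hent_p : ent p = ∑ x, ∑ z, -(p x * W x z * log (p x)) := by
    refine sum_congr rfl fun x _ => ?_
    rw [sum_neg_distrib, ← sum_mul, ← mul_sum, hW1, mul_one, negMulLog, neg_mul]
  have hent_q : ent (fun z => ∑ x, p x * W x z)
      = ∑ x, ∑ z, -(p x * W x z * log (∑ x', p x' * W x' z)) := by
    rw [sum_comm]
    refine sum_congr rfl fun z _ => ?_
    rw [sum_neg_distrib, ← sum_mul, negMulLog, neg_mul]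
  unfold mutualInfoChan relEnt
  rw [hent_p, hent_q, ent, Fintype.sum_prod_type, Fintype.sum_prod_type, ← sum_add_distrib,
    ← sum_sub_distrib]
  refine sum_congr rfl fun x _ => ?_
  rw [← sum_add_distrib, ← sum_sub_distrib]
  refine sum_congr rfl fun z _ => ?_
  rw [mul_log_div_mul_eq (mul_apply_eq_zero_of_mul_sum_eq_zero hp hW), negMulLog]
  ring

theorem mutualInfo_convex_in_channel_general {α β : Type*} [Fintype α] [Fintype β]
    (p : α → ℝ) (hp0 : ∀ x, 0 ≤ p x)
    (W₁ W₂ : α → β → ℝ)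
    (hW₁ : ∀ x, (∀ z, 0 ≤ W₁ x z) ∧ ∑ z : β, W₁ x z = 1)
    (hW₂ : ∀ x, (∀ z, 0 ≤ W₂ x z) ∧ ∑ z : β, W₂ x z = 1)
    (t : ℝ) (ht0 : 0 ≤ t) (ht1 : t ≤ 1) :
    mutualInfoChan p (fun x z => t * W₁ x z + (1 - t) * W₂ x z)
      ≤ t * mutualInfoChan p W₁ + (1 - t) * mutualInfoChan p W₂ := by
  have hW : ∀ x, (∀ z, 0 ≤ t * W₁ x z + (1 - t) * W₂ x z)
      ∧ ∑ z, (t * W₁ x z + (1 - t) * W₂ x z) = 1 := fun x =>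
    ⟨fun z => add_nonneg (mul_nonneg ht0 ((hW₁ x).1 z)) (mul_nonneg (by linarith) ((hW₂ x).1 z)),
      by rw [sum_add_distrib, ← mul_sum, ← mul_sum, (hW₁ x).2, (hW₂ x).2]; ring⟩
  have hprod : ∀ V : α → β → ℝ, (∀ x z, 0 ≤ V x z) →
      ∀ xz : α × β, 0 ≤ p xz.1 * ∑ x, p x * V x xz.2 := fun V hV xz =>
    mul_nonneg (hp0 _) (sum_nonneg fun x _ => mul_nonneg (hp0 x) (hV x _))
  rw [mutualInfoChan_eq_relEnt p _ hp0 (fun x => (hW x).1) (fun x => (hW x).2),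
    mutualInfoChan_eq_relEnt p W₁ hp0 (fun x => (hW₁ x).1) (fun x => (hW₁ x).2),
    mutualInfoChan_eq_relEnt p W₂ hp0 (fun x => (hW₂ x).1) (fun x => (hW₂ x).2)]
  convert relEnt_mix_le _ _ _ _ (fun xz => mul_nonneg (hp0 xz.1) ((hW₁ xz.1).1 xz.2))
    (fun xz => mul_nonneg (hp0 xz.1) ((hW₂ xz.1).1 xz.2))
    (hprod W₁ fun x => (hW₁ x).1) (hprod W₂ fun x => (hW₂ x).1)
    (fun xz => mul_apply_eq_zero_of_mul_sum_eq_zero hp0 fun x => (hW₁ x).1)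
    (fun xz => mul_apply_eq_zero_of_mul_sum_eq_zero hp0 fun x => (hW₂ x).1) ht0 ht1 using 2
  · funext xz
    ring
  · funext xz
    simp only [mul_sum, ← sum_add_distrib]
    exact sum_congr rfl fun x _ => by ring

/-- **Mutual information is convex in the channel:** for a fixed input pmf `p` and
channels `W₁, W₂`, `I(p; t W₁ + (1−t) W₂) ≤ t I(p; W₁) + (1−t) I(p; W₂)` for
`t ∈ [0, 1]`. -/
theorem mutualInfo_convex_in_channel {α β : Type*} [Fintype α] [Fintype β]
    (p : α → ℝ) (hp0 : ∀ x, 0 ≤ p x) (hp1 : ∑ x : α, p x = 1)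
    (W₁ W₂ : α → β → ℝ)
    (hW₁ : ∀ x, (∀ z, 0 ≤ W₁ x z) ∧ ∑ z : β, W₁ x z = 1)
    (hW₂ : ∀ x, (∀ z, 0 ≤ W₂ x z) ∧ ∑ z : β, W₂ x z = 1)
    (t : ℝ) (ht0 : 0 ≤ t) (ht1 : t ≤ 1) :
    mutualInfoChan p (fun x z => t * W₁ x z + (1 - t) * W₂ x z)
      ≤ t * mutualInfoChan p W₁ + (1 - t) * mutualInfoChan p W₂ :=
  mutualInfo_convex_in_channel_general p hp0 W₁ W₂ hW₁ hW₂ t ht0 ht1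
end
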